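/- In the game where player i and its identical copy i* can do task τ_i and there are m-1 other tasks each with one player (v(S) = p iff all m-1 other players are in S and S ∩ {i, i*} ≠ ∅), the Shapley value of i* (and of i) equals p/((m+1)m), and after adding further k-1 identical players for another task τ_j, the Shapley value of i* becomes p · Σ_{i=1}^{k} i!(m-1)!/(m+i)!. -/

import Mathlib

/-!
The weight `w n s = shapleyWeight n s = s! (n - s - 1)! / n!` is the probability that, in a
uniformly random order of `n` players, the predecessors of a given player are exactly a given set
of `s` others. Summing it over the coalitions between `B` and `U` therefore gives the probability
that the player comes after all of `B` and before the `c` players outside `U`, namely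
`w (#B + c + 1) #B`; formally this follows by induction on `U \ B` from the Pascal-type rule
`w n s = w (n + 1) s + w (n + 1) (s + 1)`.

In the first game `i*` is pivotal only for the coalition of the singleton players. In the second it
is pivotal exactly for the coalitions strictly between the singleton players and the
singleton-plus-`τ_j` players, so `φ_{i*} = p (w m (m - 2) - w (m + k) (m - 2))`, which telescopes
by the same rule into the claimed sum.
-/

/-- The Shapley value of player `i` in the cooperative game `(N, v)`. -/
noncomputable def shapley {α : Type*} [DecidableEq α] (N : Finset α) (v : Finset α → ℝ) (i : α) : ℝ :=
  ∑ S ∈ (N.erase i).powerset,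
    ((S.card.factorial * (N.card - S.card - 1).factorial : ℕ) : ℝ) / (N.card.factorial : ℝ) *
      (v (insert i S) - v S)

open Finset
open scoped Nat

noncomputable def shapleyWeight (n s : ℕ) : ℝ := ((s ! * (n - s - 1)! : ℕ) : ℝ) / (n ! : ℝ)

theorem shapleyWeight_add_add_one (s t : ℕ) :
    shapleyWeight (s + t + 1) s = s ! * t ! / (s + t + 1)! := by
  simp [shapleyWeight, show s + t + 1 - s - 1 = t by omega]

theorem shapleyWeight_add_two (s : ℕ) : shapleyWeight (s + 2) s = 1 / ((s + 2) * (s + 1)) := by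
  rw [shapleyWeight_add_add_one s 1, Nat.factorial_succ (s + 1), Nat.factorial_succ s]
  push_cast
  field_simp
  ring

theorem shapleyWeight_eq_add {n s : ℕ} (h : s < n) :
    shapleyWeight n s = shapleyWeight (n + 1) s + shapleyWeight (n + 1) (s + 1) := by
  obtain ⟨t, rfl⟩ : ∃ t, n = s + t + 1 := ⟨n - s - 1, by omega⟩
  rw [shapleyWeight_add_add_one, show s + t + 1 + 1 = s + (t + 1) + 1 by ring,
    shapleyWeight_add_add_one, show s + (t + 1) + 1 = s + 1 + t + 1 by ring,
    shapleyWeight_add_add_one, show s + 1 + t + 1 = s + t + 1 + 1 by ring,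
    Nat.factorial_succ (s + t + 1), Nat.factorial_succ s, Nat.factorial_succ t]
  push_cast
  field_simp
  ring

theorem sum_range_shapleyWeight_succ {n s : ℕ} (h : s < n) (k : ℕ) :
    ∑ l ∈ range k, shapleyWeight (n + l + 1) (s + 1) =
      shapleyWeight n s - shapleyWeight (n + k) s := by
  have telescope := sum_range_sub' (fun l => shapleyWeight (n + l) s) k
  rw [add_zero] at telescope
  rw [← telescope]
  refine sum_congr rfl fun l _ => ?_
  rw [shapleyWeight_eq_add (show s < n + l by omega), ← add_assoc]
  ring

theorem sum_powerset_shapleyWeight {α : Type*} [DecidableEq α] (D : Finset α) (b c : ℕ) :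
    ∑ T ∈ D.powerset, shapleyWeight (b + c + #D + 1) (b + #T) = shapleyWeight (b + c + 1) b := by
  induction D using Finset.induction_on generalizing b c with
  | empty => simp
  | insert x D hx ih =>
    rw [sum_powerset_insert hx, card_insert_of_notMem hx,
      shapleyWeight_eq_add (show b < b + c + 1 by omega)]
    congr 1
    · convert ih b (c + 1) using 3 <;> ring
    · convert ih (b + 1) c using 2 with T hT
      · rw [card_insert_of_notMem fun hxT => hx (mem_powerset.1 hT hxT)]
        congr 1 <;> ring
      · ring

theorem sum_Icc_shapleyWeight {α : Type*} [DecidableEq α] {B U : Finset α} (hBU : B ⊆ U) (c : ℕ) :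
    ∑ S ∈ Icc B U, shapleyWeight (#U + c + 1) #S = shapleyWeight (#B + c + 1) #B := by
  have hdisj : ∀ T ∈ (U \ B).powerset, Disjoint B T := fun T hT =>
    disjoint_sdiff.mono_right (mem_powerset.1 hT)
  rw [Icc_eq_image_powerset hBU, sum_image fun T hT T' hT' hTT' => by
    rw [← union_sdiff_cancel_left (hdisj T hT), hTT', union_sdiff_cancel_left (hdisj T' hT')]]
  rw [← card_sdiff_add_card_eq_card hBU, ← sum_powerset_shapleyWeight (U \ B) #B c]
  refine sum_congr rfl fun T hT => ?_
  rw [card_union_of_disjoint (hdisj T hT)]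
  congr 1
  ring

theorem sum_Ioc_shapleyWeight {α : Type*} [DecidableEq α] {B U : Finset α} (hBU : B ⊆ U) (c : ℕ) :
    ∑ S ∈ Ioc B U, shapleyWeight (#U + c + 1) #S =
      shapleyWeight (#B + c + 1) #B - shapleyWeight (#U + c + 1) #B := by
  rw [← sum_Icc_shapleyWeight hBU, Icc_eq_cons_Ioc hBU, sum_cons, add_sub_cancel_left]

theorem shapley_eq_of_marginal {α : Type*} [DecidableEq α] {N : Finset α} {v : Finset α → ℝ}
    {i : α} {X : Finset (Finset α)} (hX : X ⊆ (N.erase i).powerset) (p : ℝ)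
    (hv : ∀ S ⊆ N.erase i, v (insert i S) - v S = if S ∈ X then p else 0) :
    shapley N v i = p * ∑ S ∈ X, shapleyWeight #N #S := by
  rw [shapley, mul_sum, ← inter_eq_right.2 hX, ← sum_ite_mem]
  refine sum_congr rfl fun S hS => ?_
  rw [hv S (mem_powerset.1 hS), mul_ite, mul_zero, mul_comm]
  rfl

section Games

variable {ι κ : Type*} [Fintype ι] [Fintype κ] [DecidableEq ι] [DecidableEq κ]

theorem shapley_inr_of_forall_inl_exists_inr (p : ℝ) (b : κ) :
    shapley univ
      (fun S : Finset (ι ⊕ κ) => if (∀ a, Sum.inl a ∈ S) ∧ (∃ c, Sum.inr c ∈ S) then p else 0)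
      (Sum.inr b) = p * shapleyWeight (Fintype.card ι + Fintype.card κ) (Fintype.card ι) := by
  rw [shapley_eq_of_marginal (X := {univ.map .inl}) ?_ p, sum_singleton, card_map, card_univ,
    card_univ, Fintype.card_sum]
  · intro S _
    have hA : S = univ.map .inl ↔ (∀ a, Sum.inl a ∈ S) ∧ ¬ ∃ c, Sum.inr c ∈ S := by
      simp [Finset.ext_iff, Sum.forall]
    by_cases hall : ∀ a, Sum.inl a ∈ S <;> by_cases hc : ∃ c, Sum.inr c ∈ S <;>
      simp [hA, hall, hc]
  · simp [subset_iff]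

theorem shapley_inr_inl_one_of_forall_inl_exists_inr_inl_exists_inr_inr (p : ℝ) :
    shapley univ
      (fun S : Finset (ι ⊕ (Fin 2 ⊕ κ)) =>
        if (∀ a, Sum.inl a ∈ S) ∧ (∃ b, Sum.inr (Sum.inl b) ∈ S) ∧ (∃ c, Sum.inr (Sum.inr c) ∈ S)
        then p else 0)
      (Sum.inr (Sum.inl 1)) =
      p * (shapleyWeight (Fintype.card ι + 2) (Fintype.card ι) -
        shapleyWeight (Fintype.card ι + Fintype.card κ + 2) (Fintype.card ι)) := by
  set A : Finset (ι ⊕ (Fin 2 ⊕ κ)) := univ.map .inl with hA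
  set U : Finset (ι ⊕ (Fin 2 ⊕ κ)) := univ.disjSum (univ.map .inr) with hU
  have hAU : A ⊆ U := by simp [hA, hU, subset_iff]
  have hAcard : #A = Fintype.card ι := by simp [hA]
  have hUcard : #U = Fintype.card ι + Fintype.card κ := by simp [hU]
  have hcard : #(univ : Finset (ι ⊕ (Fin 2 ⊕ κ))) = #U + 1 + 1 := by
    simp [hUcard, Fintype.card_sum]; ring
  rw [shapley_eq_of_marginal (X := Ioc A U) ?_ p, hcard, sum_Ioc_shapleyWeight hAU, hAcard, hUcard]
  · intro S hS
    have h1 : Sum.inr (Sum.inl 1) ∉ S := fun h => by simpa using hS h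
    have hX : S ∈ Ioc A U ↔
        (∀ a, Sum.inl a ∈ S) ∧ Sum.inr (Sum.inl 0) ∉ S ∧ ∃ c, Sum.inr (Sum.inr c) ∈ S := by
      simp [hA, hU, Finset.ssubset_iff_subset_ne, Finset.ext_iff, subset_iff, Sum.forall,
        Fin.forall_fin_two, h1]
      tauto
    by_cases hall : ∀ a, Sum.inl a ∈ S <;> by_cases h0 : Sum.inr (Sum.inl 0) ∈ S <;>
      by_cases hc : ∃ c, Sum.inr (Sum.inr c) ∈ S <;> simp [hX, hall, h0, hc, h1, Fin.exists_fin_two]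
  · exact fun S hS => mem_powerset.2 ((mem_Ioc.1 hS).2.trans (by simp [hU, subset_iff]))

end Games

theorem shapley_dummy_copy_value_general (m k : ℕ) (hm : 2 ≤ m) (p : ℝ) :
    (let v₁ : Finset (Fin (m - 1) ⊕ Fin 2) → ℝ :=
      fun S => if (∀ a : Fin (m - 1), Sum.inl a ∈ S) ∧ (∃ b : Fin 2, Sum.inr b ∈ S)
               then p else 0
     ∀ b : Fin 2, shapley Finset.univ v₁ (Sum.inr b) = p / ((m + 1) * m)) ∧
    (let v₂ : Finset (Fin (m - 2) ⊕ (Fin 2 ⊕ Fin k)) → ℝ :=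
      fun S => if (∀ a : Fin (m - 2), Sum.inl a ∈ S) ∧
                  (∃ b : Fin 2, Sum.inr (Sum.inl b) ∈ S) ∧
                  (∃ c : Fin k, Sum.inr (Sum.inr c) ∈ S)
               then p else 0
     shapley Finset.univ v₂ (Sum.inr (Sum.inl 1)) =
       p * ∑ l ∈ Finset.range k,
         (((l + 1).factorial * (m - 1).factorial : ℕ) : ℝ) / ((m + l + 1).factorial : ℝ)) := by
  obtain ⟨a, rfl⟩ : ∃ a, m = a + 2 := ⟨m - 2, by omega⟩
  -- The games decide their conditions by `Nat.decidableForallFin` and `Nat.decidableExistsFin`,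
  -- the general lemmas by the `Fintype` instances; `convert` reconciles the two.
  refine ⟨fun b => ?_, ?_⟩
  · convert shapley_inr_of_forall_inl_exists_inr (ι := Fin (a + 2 - 1)) p b using 4
    rw [Fintype.card_fin, Fintype.card_fin, show a + 2 - 1 = a + 1 by omega, shapleyWeight_add_two]
    push_cast
    ring
  · convert shapley_inr_inl_one_of_forall_inl_exists_inr_inl_exists_inr_inr
      (ι := Fin (a + 2 - 2)) (κ := Fin k) p using 4
    rw [Fintype.card_fin, Fintype.card_fin, Nat.add_sub_cancel,
      show a + k + 2 = a + 2 + k by ring, ← sum_range_shapleyWeight_succ (by omega : a < a + 2)]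
    refine sum_congr rfl fun l _ => ?_
    rw [shapleyWeight, show a + 2 + l + 1 - (a + 1) - 1 = l + 1 by omega,
      show a + 2 - 1 = a + 1 by omega, mul_comm]

/-- Base game: `m-1` singleton task players (`Sum.inl`) plus two identical players `i, i*`
(`Sum.inr 0, Sum.inr 1`) for task `τ_i`; a coalition is worth `p` iff it contains all
singleton players and at least one of `{i, i*}`.  Then `φ_i = φ_{i*} = p/((m+1)m)`.
Extended game: `m-2` singleton players (`Sum.inl`), two identical players `{i, i*}` for
`τ_i` (`Sum.inr (Sum.inl ·)`), and `k` identical players for another task `τ_j`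
(`Sum.inr (Sum.inr ·)`); then `φ_{i*} = p · Σ_{l=1}^{k} l!(m-1)!/(m+l)!`
(written below with the index shifted). -/
theorem shapley_dummy_copy_value (m k : ℕ) (hm : 2 ≤ m) (hk : 1 ≤ k) (p : ℝ) :
    (let v₁ : Finset (Fin (m - 1) ⊕ Fin 2) → ℝ :=
      fun S => if (∀ a : Fin (m - 1), Sum.inl a ∈ S) ∧ (∃ b : Fin 2, Sum.inr b ∈ S)
               then p else 0
     ∀ b : Fin 2, shapley Finset.univ v₁ (Sum.inr b) = p / ((m + 1) * m)) ∧
    (let v₂ : Finset (Fin (m - 2) ⊕ (Fin 2 ⊕ Fin k)) → ℝ :=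
      fun S => if (∀ a : Fin (m - 2), Sum.inl a ∈ S) ∧
                  (∃ b : Fin 2, Sum.inr (Sum.inl b) ∈ S) ∧
                  (∃ c : Fin k, Sum.inr (Sum.inr c) ∈ S)
               then p else 0
     shapley Finset.univ v₂ (Sum.inr (Sum.inl 1)) =
       p * ∑ l ∈ Finset.range k,
         (((l + 1).factorial * (m - 1).factorial : ℕ) : ℝ) / ((m + l + 1).factorial : ℝ)) :=
  shapley_dummy_copy_value_general m k hm p
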